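/- For every vertex v of a 3-dimensional normal simplicial pseudo manifold Δ, the link lk_Δ(v) has Euler characteristic at most 2. -/

import Mathlib

/-!
Glue the triangles of a strongly connected closed surface `L` one at a time along a spanning tree
of its dual graph, and let `T` be the `f₂ - 1` gluing edges. Every edge lies in exactly two
triangles, so the two other edges of a newly glued triangle are not in `T`, and the gluing edge
can be bypassed through them: the edges outside `T` still connect all `f₀` vertices. Hence
`f₁ - (f₂ - 1) ≥ f₀ - 1`, i.e. `χ(L) = f₀ - f₁ + f₂ ≤ 2`. Normality makes every vertex link such a
surface.
-/

open Finset

variable {V : Type*} [DecidableEq V]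

/-- A finite abstract simplicial complex: a finite collection of finite subsets
closed under taking subsets. -/
def IsComplex (Δ : Finset (Finset V)) : Prop :=
  ∀ σ ∈ Δ, ∀ τ ⊆ σ, τ ∈ Δ

/-- The link of a simplex `τ`. -/
def lkS (Δ : Finset (Finset V)) (τ : Finset V) : Finset (Finset V) :=
  Δ.filter fun σ => σ ∩ τ = ∅ ∧ σ ∪ τ ∈ Δ

/-- The link of a vertex `v`. -/
def lk (Δ : Finset (Finset V)) (v : V) : Finset (Finset V) :=
  Δ.filter fun σ => v ∉ σ ∧ insert v σ ∈ Δ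

/-- The closed star of a vertex `v`. -/
def closedStar (Δ : Finset (Finset V)) (v : V) : Finset (Finset V) :=
  Δ.filter fun σ => insert v σ ∈ Δ

/-- The deletion of a vertex `v`. -/
def deletion (Δ : Finset (Finset V)) (v : V) : Finset (Finset V) :=
  Δ.filter fun σ => v ∉ σ

/-- Number of simplices of cardinality `p` (i.e. of dimension `p - 1`). -/
def fm (Δ : Finset (Finset V)) (p : ℕ) : ℕ :=
  (Δ.filter fun σ => σ.card = p).card

/-- Number of simplices of dimension `p` (i.e. of cardinality `p + 1`). -/
def fdim (Δ : Finset (Finset V)) (p : ℕ) : ℕ := fm Δ (p + 1)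

/-- Euler characteristic `χ(Δ) = Σ_{p ≥ 0} (-1)^p f^p(Δ)` (empty simplex excluded). -/
def chi (Δ : Finset (Finset V)) : ℤ :=
  ∑ σ ∈ Δ.filter (fun σ => σ ≠ ∅), (-1 : ℤ) ^ (σ.card - 1)

/-- The vertex set of a complex. -/
def verts (Δ : Finset (Finset V)) : Finset V := Δ.biUnion id

/-- `Δ` is pure of dimension `n`: every simplex is a face of some `n`-simplex. -/
def IsPure (Δ : Finset (Finset V)) (n : ℕ) : Prop :=
  ∀ σ ∈ Δ, ∃ ρ ∈ Δ, σ ⊆ ρ ∧ ρ.card = n + 1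

/-- `Δ` is non-branching in dimension `n`: every `(n-1)`-simplex (cardinality `n`)
is a face of exactly two `n`-simplices (cardinality `n+1`). -/
def NonBranching (Δ : Finset (Finset V)) (n : ℕ) : Prop :=
  ∀ σ ∈ Δ, σ.card = n → (Δ.filter fun ρ => ρ.card = n + 1 ∧ σ ⊆ ρ).card = 2

/-- Two `n`-simplices are adjacent if they share an `(n-1)`-face. -/
def adjFacet (Δ : Finset (Finset V)) (n : ℕ) (σ ρ : Finset V) : Prop :=
  σ ∈ Δ ∧ ρ ∈ Δ ∧ σ.card = n + 1 ∧ ρ.card = n + 1 ∧ (σ ∩ ρ).card = n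

/-- Strong connectivity: any two `n`-simplices are joined by a chain of `n`-simplices,
consecutive ones sharing an `(n-1)`-face. -/
def StronglyConnected (Δ : Finset (Finset V)) (n : ℕ) : Prop :=
  ∀ σ ∈ Δ, σ.card = n + 1 → ∀ ρ ∈ Δ, ρ.card = n + 1 →
    Relation.ReflTransGen (adjFacet Δ n) σ ρ

/-- An `n`-dimensional simplicial pseudo manifold. -/
def PseudoManifold (Δ : Finset (Finset V)) (n : ℕ) : Prop :=
  IsComplex Δ ∧ IsPure Δ n ∧ NonBranching Δ n ∧ StronglyConnected Δ n

/-- Normality for a 3-dimensional pseudo manifold: all vertex links are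
2-dimensional pseudo manifolds. -/
def Normal3 (Δ : Finset (Finset V)) : Prop :=
  ∀ v ∈ verts Δ, PseudoManifold (lk Δ v) 2

lemma Relation.ReflTransGen.mem_of_forall_rel {α : Type*} {r : α → α → Prop} {s : Set α}
    (hs : ∀ a b, r a b → a ∈ s → b ∈ s) {a b : α} (hab : Relation.ReflTransGen r a b)
    (ha : a ∈ s) : b ∈ s := by
  induction hab with
  | refl => exact ha
  | tail _ hbc ih => exact hs _ _ hbc ih

lemma SimpleGraph.Reachable.of_forall_adj_reachable {α : Type*} {G H : SimpleGraph α}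
    (h : ∀ x y, G.Adj x y → H.Reachable x y) {x y : α} (hxy : G.Reachable x y) :
    H.Reachable x y := by
  rw [SimpleGraph.reachable_iff_reflTransGen] at hxy ⊢
  exact Relation.reflTransGen_closed
    (fun a b hab => (H.reachable_iff_reflTransGen a b).1 (h a b hab)) _ _ hxy

def edgeGraph (E : Finset (Finset V)) : SimpleGraph V where
  Adj x y := x ≠ y ∧ {x, y} ∈ E
  symm := ⟨fun x y h => ⟨h.1.symm, pair_comm x y ▸ h.2⟩⟩
  loopless := ⟨fun _ h => h.1 rfl⟩

lemma card_le_card_add_one_of_reachable {W : Finset V} {E : Finset (Finset V)}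
    (hEW : ∀ e ∈ E, e ⊆ W) (hW : ∀ x ∈ W, ∀ y ∈ W, (edgeGraph E).Reachable x y) :
    #W ≤ #E + 1 := by
  obtain rfl | ⟨x₀, hx₀⟩ := W.eq_empty_or_nonempty
  · simp
  set G := edgeGraph E
  have hsupp : (G.connectedComponentMk x₀).supp = (W : Set V) := by
    ext y
    rw [SimpleGraph.ConnectedComponent.mem_supp_iff, SimpleGraph.ConnectedComponent.eq,
      SimpleGraph.reachable_iff_reflTransGen]
    refine ⟨fun h => ?_, fun hy => (G.reachable_iff_reflTransGen _ _).1 (hW y hy x₀ hx₀)⟩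
    rcases h.cases_head with rfl | ⟨z, hyz, -⟩
    · exact hx₀
    · exact hEW _ hyz.2 (by simp)
  have hconn : (G.induce (W : Set V)).Connected :=
    hsupp ▸ (G.connectedComponentMk x₀).connected_toSimpleGraph
  have hedges : Nat.card (G.induce (W : Set V)).edgeSet ≤ #E := by
    rw [← Nat.card_eq_finsetCard]
    refine Nat.card_le_card_of_injective
      (fun z => ⟨(z.1.map Subtype.val).toFinset, ?_⟩) fun z z' h => ?_
    · obtain ⟨z, hz⟩ := z
      induction z using Sym2.ind with
      | _ x y => simpa [Sym2.toFinset_mk_eq] using hz.2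
    · have hmem : ∀ v, v ∈ z.1.map Subtype.val ↔ v ∈ z'.1.map Subtype.val := fun v => by
        simpa only [Sym2.mem_toFinset] using Finset.ext_iff.1 (congrArg Subtype.val h) v
      exact Subtype.ext (Sym2.map.injective Subtype.val_injective (Sym2.ext hmem))
  simpa using hconn.card_vert_le_card_edgeSet_add_one.trans (Nat.add_le_add_right hedges 1)

lemma IsPure.card_le {α : Type*} {L : Finset (Finset α)} {n : ℕ} (h : IsPure L n) {σ : Finset α}
    (hσ : σ ∈ L) : #σ ≤ n + 1 := by
  obtain ⟨ρ, -, hσρ, hρ⟩ := h σ hσ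
  exact hρ ▸ card_le_card hσρ

def faces (Δ : Finset (Finset V)) (k : ℕ) : Finset (Finset V) :=
  Δ.filter fun σ => σ.card = k

lemma chi_eq_of_card_le_three {L : Finset (Finset V)} (hL : ∀ σ ∈ L, #σ ≤ 3) :
    chi L = fm L 1 - fm L 2 + fm L 3 := by
  have hmaps : ∀ σ ∈ L.filter (· ≠ ∅), #σ ∈ Icc 1 3 := fun σ hσ => by
    obtain ⟨hσL, hσ⟩ := mem_filter.1 hσ
    exact mem_Icc.2 ⟨card_pos.2 (nonempty_iff_ne_empty.2 hσ), hL σ hσL⟩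
  have hfiber : ∀ k ∈ Icc 1 3,
      ∑ σ ∈ (L.filter (· ≠ ∅)).filter (#· = k), (-1 : ℤ) ^ (#σ - 1) = (-1) ^ (k - 1) * fm L k := by
    intro k hk
    have hk1 : 1 ≤ k := (mem_Icc.1 hk).1
    have : (L.filter (· ≠ ∅)).filter (#· = k) = faces L k := by
      ext σ
      simp only [faces, mem_filter, and_assoc, and_congr_right_iff]
      exact fun _ => ⟨fun h => h.2, fun h => ⟨by rintro rfl; simp at h; omega, h⟩⟩
    rw [this, sum_congr rfl fun σ hσ => by rw [(mem_filter.1 hσ).2],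
      sum_const, nsmul_eq_mul, fm, faces, mul_comm]
  rw [chi, ← sum_fiberwise_of_maps_to hmaps, sum_congr rfl hfiber]
  simp [sum_Icc_succ_top]
  ring

lemma IsComplex.fm_one_eq_card_verts {L : Finset (Finset V)} (hL : IsComplex L) :
    fm L 1 = #(verts L) := by
  rw [fm, ← card_image_of_injective (verts L) singleton_injective]
  refine congrArg card ?_
  ext σ
  simp only [mem_filter, mem_image, verts, mem_biUnion, id]
  constructor
  · rintro ⟨hσ, h1⟩
    obtain ⟨x, rfl⟩ := card_eq_one.1 h1
    exact ⟨x, ⟨{x}, hσ, mem_singleton_self x⟩, rfl⟩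
  · rintro ⟨x, ⟨τ, hτ, hx⟩, rfl⟩
    exact ⟨hL τ hτ {x} (singleton_subset_iff.2 hx), card_singleton x⟩

lemma IsComplex.edgeGraph_reachable_of_mem {L : Finset (Finset V)} (hL : IsComplex L)
    {σ : Finset V} (hσ : σ ∈ L) {x y : V} (hx : x ∈ σ) (hy : y ∈ σ) :
    (edgeGraph (faces L 2)).Reachable x y := by
  obtain rfl | hxy := eq_or_ne x y
  · rfl
  · exact SimpleGraph.Adj.reachable
      ⟨hxy, mem_filter.2 ⟨hL σ hσ _ (insert_subset hx (singleton_subset_iff.2 hy)), card_pair hxy⟩⟩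

lemma IsComplex.edgeGraph_reachable {L : Finset (Finset V)} {n : ℕ} (hL : IsComplex L)
    (hpure : IsPure L n) (hsc : StronglyConnected L n) (hn : 0 < n) :
    ∀ x ∈ verts L, ∀ y ∈ verts L, (edgeGraph (faces L 2)).Reachable x y := by
  have hfacet : ∀ x ∈ verts L, ∃ σ ∈ L, #σ = n + 1 ∧ x ∈ σ := fun x hx => by
    obtain ⟨τ, hτ, hxτ⟩ := mem_biUnion.1 hx
    obtain ⟨σ, hσ, hτσ, hσn⟩ := hpure τ hτ
    exact ⟨σ, hσ, hσn, hτσ hxτ⟩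
  have hchain : ∀ {σ τ}, Relation.ReflTransGen (adjFacet L n) σ τ → σ ∈ L →
      ∀ x ∈ σ, ∀ y ∈ τ, (edgeGraph (faces L 2)).Reachable x y := by
    intro σ τ hστ hσ
    induction hστ with
    | refl => exact fun x hx y hy => hL.edgeGraph_reachable_of_mem hσ hx hy
    | tail _ hρτ ih =>
      obtain ⟨-, hτ, -, -, hcap⟩ := hρτ
      obtain ⟨z, hz⟩ := card_pos.1 (hcap ▸ hn)
      exact fun x hx y hy => (ih x hx z (mem_inter.1 hz).1).trans
        (hL.edgeGraph_reachable_of_mem hτ (mem_inter.1 hz).2 hy)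
  intro x hx y hy
  obtain ⟨σ, hσ, hσn, hxσ⟩ := hfacet x hx
  obtain ⟨τ, hτ, hτn, hyτ⟩ := hfacet y hy
  exact hchain (hsc σ hσ hσn τ hτ hτn) hσ x hxσ y hyτ

/-- `T` records, for each triangle of `S` but one, an edge along which it is glued onto the
others: the edges of a spanning tree of the dual graph of `S`. -/
def HasDualTree (L S : Finset (Finset V)) : Prop :=
  ∃ T ⊆ faces L 2, #T + 1 = #S ∧ (∀ e ∈ T, ∀ τ ∈ faces L 3, e ⊆ τ → τ ∈ S) ∧
    ∀ x ∈ verts L, ∀ y ∈ verts L, (edgeGraph (faces L 2 \ T)).Reachable x y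

lemma NonBranching.eq_or_eq {L : Finset (Finset V)} {n : ℕ} (h : NonBranching L n)
    {e σ ρ τ : Finset V} (he : e ∈ L) (hen : #e = n) (hσρ : σ ≠ ρ)
    (hσ : σ ∈ faces L (n + 1)) (hρ : ρ ∈ faces L (n + 1)) (hτ : τ ∈ faces L (n + 1))
    (heσ : e ⊆ σ) (heρ : e ⊆ ρ) (heτ : e ⊆ τ) : τ = σ ∨ τ = ρ := by
  have hsub : {σ, ρ} ⊆ L.filter fun ρ => #ρ = n + 1 ∧ e ⊆ ρ := by
    simp only [faces, mem_filter] at hσ hρ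
    simp [insert_subset_iff, hσ, hρ, heσ, heρ]
  have heq := eq_of_subset_of_card_le hsub (by rw [h e he hen, card_pair hσρ])
  simp only [faces, mem_filter] at hτ
  have hτ' : τ ∈ ({σ, ρ} : Finset (Finset V)) := heq ▸ mem_filter.2 ⟨hτ.1, hτ.2, heτ⟩
  simpa using hτ'

lemma HasDualTree.insert_of_adjFacet {L S : Finset (Finset V)} (hL : IsComplex L)
    (hnb : NonBranching L 2) (h : HasDualTree L S) {ρ σ : Finset V} (hadj : adjFacet L 2 ρ σ)
    (hρ : ρ ∈ S) (hσS : σ ∉ S) : HasDualTree L (insert σ S) := by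
  obtain ⟨T, hT, hcard, hint, hconn⟩ := h
  obtain ⟨hρL, hσL, hρ3, hσ3, hcap⟩ := hadj
  have hσ : σ ∈ faces L 3 := mem_filter.2 ⟨hσL, hσ3⟩
  set e := ρ ∩ σ
  have heσ : e ⊆ σ := inter_subset_right
  have he : e ∈ faces L 2 := mem_filter.2 ⟨hL σ hσL e heσ, hcap⟩
  have heT : e ∉ T := fun h => hσS (hint e h σ hσ heσ)
  obtain ⟨c, hcσ, hce⟩ := exists_mem_notMem_of_card_lt_card (s := e) (t := σ) (by omega)
  have hside : ∀ x ∈ e, (edgeGraph (faces L 2 \ insert e T)).Adj x c := by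
    intro x hx
    have hxc : x ≠ c := by rintro rfl; exact hce hx
    have hxcσ : {x, c} ⊆ σ := insert_subset (heσ hx) (singleton_subset_iff.2 hcσ)
    refine ⟨hxc, mem_sdiff.2 ⟨mem_filter.2 ⟨hL σ hσL _ hxcσ, card_pair hxc⟩, ?_⟩⟩
    rw [mem_insert, not_or]
    exact ⟨fun hxce => hce (hxce ▸ mem_insert_of_mem (mem_singleton_self c)),
      fun hxcT => hσS (hint _ hxcT σ hσ hxcσ)⟩
  refine ⟨insert e T, insert_subset he hT, ?_, ?_, ?_⟩
  · rw [card_insert_of_notMem heT, card_insert_of_notMem hσS, hcard]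
  · intro e' he' τ hτ he'τ
    rcases mem_insert.1 he' with rfl | he'
    · have hρσ : ρ ≠ σ := by rintro rfl; exact hσS hρ
      rcases hnb.eq_or_eq (mem_filter.1 he).1 hcap hρσ (mem_filter.2 ⟨hρL, hρ3⟩) hσ hτ
        inter_subset_left heσ he'τ with rfl | rfl
      · exact mem_insert_of_mem hρ
      · exact mem_insert_self _ _
    · exact mem_insert_of_mem (hint e' he' τ hτ he'τ)
  · -- an edge `{x, y} = e` of the old graph is bypassed through the third vertex `c` of `σ`
    have hreroute : ∀ x y, (edgeGraph (faces L 2 \ T)).Adj x y →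
        (edgeGraph (faces L 2 \ insert e T)).Reachable x y := by
      rintro x y ⟨hxy, hxyE⟩
      by_cases hxye : {x, y} = e
      · exact (hside x (hxye ▸ mem_insert_self x _)).reachable.trans
          (hside y (hxye ▸ mem_insert_of_mem (mem_singleton_self y))).symm.reachable
      · refine SimpleGraph.Adj.reachable ⟨hxy, ?_⟩
        simp only [mem_sdiff, mem_insert] at hxyE ⊢
        tauto
    exact fun x hx y hy => (hconn x hx y hy).of_forall_adj_reachable hreroute

lemma PseudoManifold.hasDualTree {L : Finset (Finset V)} (h : PseudoManifold L 2)
    (hF : (faces L 3).Nonempty) : HasDualTree L (faces L 3) := by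
  classical
  obtain ⟨hL, hpure, hnb, hsc⟩ := h
  obtain ⟨σ₀, hσ₀⟩ := hF
  have hσ₀tree : HasDualTree L {σ₀} :=
    ⟨∅, empty_subset _, rfl, by simp, by simpa using hL.edgeGraph_reachable hpure hsc two_pos⟩
  obtain ⟨S, hS, hSmax⟩ := exists_max_image ((faces L 3).powerset.filter (HasDualTree L)) card
    ⟨{σ₀}, mem_filter.2 ⟨by simpa using hσ₀, hσ₀tree⟩⟩
  obtain ⟨hSF, hStree⟩ := mem_filter.1 hS
  rw [mem_powerset] at hSF
  have hclosed : ∀ ρ σ, adjFacet L 2 ρ σ → ρ ∈ S → σ ∈ S := by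
    intro ρ σ hadj hρS
    by_contra hσS
    have hσ : σ ∈ faces L 3 := mem_filter.2 ⟨hadj.2.1, hadj.2.2.2.1⟩
    have := hSmax (insert σ S) <| mem_filter.2 ⟨mem_powerset.2 (insert_subset hσ hSF),
      hStree.insert_of_adjFacet hL hnb hadj hρS hσS⟩
    rw [card_insert_of_notMem hσS] at this
    omega
  obtain ⟨ρ₀, hρ₀⟩ : S.Nonempty := by
    obtain ⟨T, -, hT, -⟩ := hStree
    exact card_pos.1 (by omega)
  suffices S = faces L 3 from this ▸ hStree
  refine hSF.antisymm fun τ hτ => ?_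
  obtain ⟨hρ₀L, hρ₀3⟩ := mem_filter.1 (hSF hρ₀)
  obtain ⟨hτL, hτ3⟩ := mem_filter.1 hτ
  exact (hsc ρ₀ hρ₀L hρ₀3 τ hτL hτ3).mem_of_forall_rel (s := (S : Set (Finset V))) hclosed hρ₀

lemma PseudoManifold.chi_le_two {L : Finset (Finset V)} (h : PseudoManifold L 2) :
    chi L ≤ 2 := by
  obtain hF | hF := (faces L 3).eq_empty_or_nonempty
  · have hL : L = ∅ := eq_empty_of_forall_notMem fun σ hσ => by
      obtain ⟨ρ, hρ, -, hρ3⟩ := h.2.1 σ hσ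
      exact (eq_empty_iff_forall_notMem.1 hF) ρ (mem_filter.2 ⟨hρ, hρ3⟩)
    simp [hL, chi]
  obtain ⟨T, hT, hcard, -, hconn⟩ := h.hasDualTree hF
  have hverts := card_le_card_add_one_of_reachable (W := verts L) (E := faces L 2 \ T)
    (fun e he => subset_biUnion_of_mem id (mem_filter.1 (mem_sdiff.1 he).1).1) hconn
  rw [card_sdiff_of_subset hT] at hverts
  have hchi := chi_eq_of_card_le_three fun σ hσ => h.2.1.card_le hσ
  have hf1 := h.1.fm_one_eq_card_verts
  have hf2 : fm L 2 = #(faces L 2) := rfl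
  have hf3 : fm L 3 = #(faces L 3) := rfl
  have hT2 := card_le_card hT
  omega

theorem stmt12_general (Δ : Finset (Finset V))
    (hnormal : Normal3 Δ) : ∀ v ∈ verts Δ, chi (lk Δ v) ≤ 2 :=
  fun v hv => (hnormal v hv).chi_le_two

/-- Every vertex link of a 3-dimensional normal simplicial
pseudo manifold has Euler characteristic at most 2. -/
theorem stmt12 (Δ : Finset (Finset V)) (hpm : PseudoManifold Δ 3)
    (hnormal : Normal3 Δ) : ∀ v ∈ verts Δ, chi (lk Δ v) ≤ 2 :=
  stmt12_general Δ hnormal
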